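/- Let f : Finset α → ℝ be finite type of order ≤ n, i.e. for every pair of finite sets D′ ⊆ D with |D| − |D′| > n one has Σ_{D′ ⊆ H ⊆ D} (−1)^{|D| − |H|} f(H) = 0. Then for every finite set D, f(D) = Σ_{H ⊆ D, |H| ≤ n} C_f(H), where C_f(H) = Σ_{K ⊆ H} (−1)^{|H| − |K|} f(K). In particular f is determined by the values C_f(H) for |H| ≤ n. -/

import Mathlib

/-- The alternating-sum transform `C_f(H) = Σ_{K ⊆ H} (−1)^(|H| − |K|) f(K)`. -/
noncomputable def Cf {α : Type*} (f : Finset α → ℝ) (H : Finset α) : ℝ :=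
  ∑ K ∈ H.powerset, (-1 : ℝ) ^ (H.card - K.card) * f K

/-- `f` is finite type of order ≤ n: for all `D' ⊆ D` with `|D| − |D'| > n`,
the alternating sum `Σ_{D' ⊆ H ⊆ D} (−1)^(|D| − |H|) f(H)` vanishes. -/
def FiniteTypeLE {α : Type*} [DecidableEq α] (n : ℕ) (f : Finset α → ℝ) : Prop :=
  ∀ D' D : Finset α, D' ⊆ D → D.card - D'.card > n →
    ∑ H ∈ D.powerset.filter (fun H => D' ⊆ H),
      (-1 : ℝ) ^ (D.card - H.card) * f H = 0

/-!
Möbius inversion on the Boolean lattice gives `f D = Σ_{H ⊆ D} C_f(H)`, because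
`Σ_{K ⊆ H ⊆ D} (−1)^(|H| − |K|)` vanishes unless `K = D`. Taking `D' = ∅` in the finite type
condition says exactly that `C_f(H) = 0` once `|H| > n`, so those terms drop out.
-/

open Finset

section

variable {α : Type*} [DecidableEq α]

theorem Finset.sum_Icc_neg_one_pow_card_sub {R : Type*} [CommRing R] {s t : Finset α}
    (hst : s ⊆ t) : ∑ u ∈ Icc s t, (-1 : R) ^ (#u - #s) = if s = t then 1 else 0 := by
  have hdisj : ∀ v ∈ (t \ s).powerset, Disjoint s v := fun v hv =>
    disjoint_sdiff.mono_right (mem_powerset.1 hv)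
  rw [Icc_eq_image_powerset hst, sum_image fun v hv w hw hvw => by
    rw [← union_sdiff_cancel_left (hdisj v hv), hvw, union_sdiff_cancel_left (hdisj w hw)]]
  calc ∑ v ∈ (t \ s).powerset, (-1 : R) ^ (#(s ∪ v) - #s)
      = ((∑ v ∈ (t \ s).powerset, (-1 : ℤ) ^ #v : ℤ) : R) := by
        push_cast
        exact sum_congr rfl fun v hv => by rw [card_union_of_disjoint (hdisj v hv),
          Nat.add_sub_cancel_left]
    _ = if s = t then 1 else 0 := by
        have hempty : t \ s = ∅ ↔ s = t :=
          sdiff_eq_empty_iff_subset.trans ⟨subset_antisymm hst, fun h => h ▸ subset_rfl⟩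
        simp only [sum_powerset_neg_one_pow_card, hempty]
        split_ifs <;> simp

theorem sum_powerset_Cf (f : Finset α → ℝ) (D : Finset α) :
    ∑ H ∈ D.powerset, Cf f H = f D := by
  unfold Cf
  rw [sum_comm' (t' := D.powerset) (s' := fun K => Icc K D) fun H K => by
    simp only [mem_powerset, mem_Icc]
    exact ⟨fun ⟨hHD, hKH⟩ => ⟨⟨hKH, hHD⟩, hKH.trans hHD⟩, fun ⟨⟨hKH, hHD⟩, _⟩ => ⟨hHD, hKH⟩⟩]
  simp_rw [← sum_mul]
  rw [sum_congr rfl fun K hK => by rw [sum_Icc_neg_one_pow_card_sub (mem_powerset.1 hK)]]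
  simp

theorem Cf_eq_zero_of_lt_card {n : ℕ} {f : Finset α → ℝ} (hf : FiniteTypeLE n f)
    {H : Finset α} (hH : n < #H) : Cf f H = 0 := by
  simpa [Cf] using hf ∅ H (empty_subset H) (by simpa using hH)

end

/-- A finite type function of order ≤ n is determined by `C_f` on sets of
size at most `n`: `f(D) = Σ_{H ⊆ D, |H| ≤ n} C_f(H)`. -/
theorem finiteType_inversion_truncated {α : Type*} [DecidableEq α] (n : ℕ) (f : Finset α → ℝ)
    (hf : FiniteTypeLE n f) (D : Finset α) :
    f D = ∑ H ∈ D.powerset.filter (fun H => H.card ≤ n), Cf f H := by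
  rw [sum_filter_of_ne fun H _ hH => not_lt.1 (mt (Cf_eq_zero_of_lt_card hf) hH),
    sum_powerset_Cf]
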